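/- Let r be a positive integer and Γ a finite connected graph with first Betti number h^1(Γ), with legs carrying residues a_i ∈ ℤ/rℤ. Then the number of functions w from half-edges of Γ to ℤ/rℤ satisfying (R1) w(leg i) = a_i, (R2) w(h) + w(h') = 0 for each edge (h,h'), and (R3) the sum of w over half-edges at each vertex is 0 mod r, is r^{h^1(Γ)} if Σ_i a_i ≡ 0 (mod r), and 0 otherwise. -/

import Mathlib

/-!
Let `∂ : (E → A) → (V → A)` send an edge weighting to its signed vertex sums. Every boundary has
total sum zero, and on a connected graph the converse holds, since `δ_u - δ_v` is the boundary of
a walk from `u` to `v`. Hence a fibre of `∂` over `y` is empty unless `∑ y = 0`, and otherwise a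
coset of `ker ∂`; counting, `|ker ∂| · |A|^{|V|-1} = |A|^{|E|}`, so `|ker ∂| = |A|^{|E|-|V|+1}`.
The legs only contribute the right-hand side `y = -c`, whose total sum is `-∑ aᵢ`.
-/

open Finset

lemma Nat.eq_pow_sub_of_mul_pow_eq {a r m n : ℕ} (hr : 0 < r) (h : a * r ^ m = r ^ n) :
    a = r ^ (n - m) := by
  obtain rfl | hr := (Nat.one_le_iff_ne_zero.2 hr.ne').eq_or_lt
  · simpa using h
  have hmn : m ≤ n := (Nat.pow_dvd_pow_iff_le_right hr).1 (Dvd.intro_left a h)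
  refine Nat.eq_of_mul_eq_mul_right (pow_pos (by omega) m) ?_
  rw [h, ← pow_add, Nat.sub_add_cancel hmn]

lemma AddMonoidHom.card_ker_mul_card_of_surjective {G H : Type*} [AddGroup G] [AddGroup H]
    (f : G →+ H) (hf : Function.Surjective f) : Nat.card f.ker * Nat.card H = Nat.card G := by
  rw [← AddSubgroup.card_top (G := H), ← f.range_eq_top.2 hf, ← AddSubgroup.index_ker,
    AddSubgroup.card_mul_index]

namespace Multigraph

variable {V E A : Type*} [Fintype E] [DecidableEq V] [AddCommGroup A]

def adjGraph (ends : E → V × V) : SimpleGraph V :=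
  SimpleGraph.fromRel fun u v => ∃ e, ends e = (u, v)

def boundary (ends : E → V × V) : (E → A) →+ (V → A) :=
  AddMonoidHom.mk' (fun w v => ∑ e, ((if (ends e).1 = v then w e else 0)
      + (if (ends e).2 = v then -(w e) else 0))) fun w w' => by
    funext v
    simp only [Pi.add_apply, ← sum_add_distrib]
    refine sum_congr rfl fun e _ => ?_
    split_ifs <;> abel

variable (V A) in
def totalSum [Fintype V] : (V → A) →+ A :=
  AddMonoidHom.mk' (fun f => ∑ v, f v) fun _ _ => sum_add_distrib

lemma totalSum_surjective [Fintype V] [Nonempty V] : Function.Surjective (totalSum V A) := by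
  intro x
  obtain ⟨v⟩ := ‹Nonempty V›
  exact ⟨Pi.single v x, by simp [totalSum]⟩

lemma boundary_single [DecidableEq E] (ends : E → V × V) (e : E) (x : A) :
    boundary ends (Pi.single e x) = Pi.single (ends e).1 x - Pi.single (ends e).2 x := by
  funext v
  rw [boundary, AddMonoidHom.mk'_apply, sum_eq_single e (fun e' _ he' => by simp [he'])
    (by simp)]
  simp only [Pi.single_eq_same, Pi.sub_apply, Pi.single_apply, eq_comm (a := v)]
  split_ifs <;> abel

lemma sum_boundary_apply [Fintype V] (ends : E → V × V) (w : E → A) :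
    ∑ v, boundary ends w v = 0 := by
  simp only [boundary, AddMonoidHom.mk'_apply]
  rw [sum_comm]
  exact sum_eq_zero fun e _ => by simp [sum_add_distrib]

lemma single_sub_single_mem_range_boundary (ends : E → V × V) {u v : V}
    (p : (adjGraph ends).Walk u v) (x : A) :
    (Pi.single u x - Pi.single v x : V → A) ∈ (boundary ends).range := by
  classical
  induction p with
  | nil => exact ⟨0, by simp⟩
  | @cons u y v hadj _ ih =>
    have hstep : (Pi.single u x - Pi.single y x : V → A) ∈ (boundary ends).range := by
      obtain ⟨-, ⟨e, he⟩ | ⟨e, he⟩⟩ := SimpleGraph.fromRel_adj _ _ _ |>.1 hadj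
      · exact ⟨Pi.single e x, by rw [boundary_single, he]⟩
      · exact ⟨-Pi.single e x, by rw [map_neg, boundary_single, he, neg_sub]⟩
    simpa using add_mem hstep ih

lemma range_boundary [Fintype V] {ends : E → V × V} (hconn : (adjGraph ends).Connected) :
    (boundary (A := A) ends).range = (totalSum V A).ker := by
  refine le_antisymm ?_ ?_
  · rintro _ ⟨w, rfl⟩
    exact sum_boundary_apply ends w
  intro f (hf : ∑ v, f v = 0)
  obtain ⟨v₀⟩ := hconn.nonempty
  have hdecomp : f = ∑ v, (Pi.single v (f v) - Pi.single v₀ (f v)) := by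
    funext u
    simp [Finset.sum_apply, sum_sub_distrib, Pi.single_apply, hf]
  rw [hdecomp]
  exact sum_mem fun v _ =>
    single_sub_single_mem_range_boundary ends (hconn.preconnected v v₀).some (f v)

lemma card_ker_boundary [Fintype V] [Finite A] {ends : E → V × V}
    (hconn : (adjGraph ends).Connected) :
    Nat.card (boundary (A := A) ends).ker
      = Nat.card A ^ (Fintype.card E + 1 - Fintype.card V) := by
  have := hconn.nonempty
  have hE : Nat.card (boundary (A := A) ends).ker * Nat.card (boundary (A := A) ends).range
      = Nat.card A ^ Fintype.card E := by
    rw [← AddSubgroup.index_ker, AddSubgroup.card_mul_index, Nat.card_fun,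
      Nat.card_eq_fintype_card (α := E)]
  have hV : Nat.card (boundary (A := A) ends).range * Nat.card A
      = Nat.card A ^ Fintype.card V := by
    rw [range_boundary hconn, (totalSum V A).card_ker_mul_card_of_surjective totalSum_surjective,
      Nat.card_fun, Nat.card_eq_fintype_card (α := V)]
  refine Nat.eq_pow_sub_of_mul_pow_eq Nat.card_pos ?_
  rw [← hV, ← mul_assoc, hE, pow_succ]

lemma card_boundary_fiber [Fintype V] [Finite A] [DecidableEq A] {ends : E → V × V}
    (hconn : (adjGraph ends).Connected) (y : V → A) :
    Nat.card {w // boundary ends w = y}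
      = if ∑ v, y v = 0 then Nat.card A ^ (Fintype.card E + 1 - Fintype.card V) else 0 := by
  split_ifs with hy
  · obtain ⟨w₀, rfl⟩ := (range_boundary hconn).ge (show y ∈ (totalSum V A).ker from hy)
    rw [← card_ker_boundary hconn]
    exact Nat.card_congr ((boundary ends).fiberEquivKer w₀)
  · have : IsEmpty {w // boundary ends w = y} :=
      ⟨fun ⟨w, hw⟩ => hy (hw ▸ sum_boundary_apply ends w)⟩
    exact Nat.card_of_isEmpty

end Multigraph

/-- Counting weight functions mod `r` on a connected graph: the number of
`w : E → ℤ/r` (assigning a weight to each oriented edge; the opposite half-edge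
carries the negative, which is condition (R2)) such that at each vertex the sum of
incident half-edge weights plus leg residues vanishes (R3), with leg residues fixed
to `a_i` (R1), is `r^{h¹(Γ)}` if `Σ a_i ≡ 0 (mod r)` and `0` otherwise, where
`h¹(Γ) = #E - #V + 1`. -/
theorem count_weight_functions {V E ι : Type} [Fintype V] [Fintype E] [Fintype ι]
    [DecidableEq V] (r : ℕ) (hr : 0 < r)
    (ends : E → V × V)
    (hconn : (SimpleGraph.fromRel (fun u v => ∃ e, ends e = (u, v))).Connected)
    (leg : ι → V) (a : ι → ZMod r) :
    Nat.card {w : E → ZMod r //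
        ∀ v : V, (∑ e : E, ((if (ends e).1 = v then w e else 0)
              + (if (ends e).2 = v then -(w e) else 0)))
            + ∑ i : ι, (if leg i = v then a i else 0) = 0}
      = if (∑ i : ι, a i) = 0
        then r ^ (Fintype.card E + 1 - Fintype.card V) else 0 := by
  have : NeZero r := ⟨hr.ne'⟩
  set c : V → ZMod r := fun v => ∑ i, if leg i = v then a i else 0
  have hc : ∑ v, (-c) v = -∑ i, a i := by simp [c, sum_comm (γ := V)]
  rw [Nat.card_congr (Equiv.subtypeEquivRight
      (q := fun w => Multigraph.boundary ends w = -c) fun w => ?_),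
    Multigraph.card_boundary_fiber hconn, hc, Nat.card_zmod]
  · simp only [neg_eq_zero]
  · simp [funext_iff, Multigraph.boundary, c, eq_neg_iff_add_eq_zero]
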